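/- Consider the Dirac-GAN ODE system dφ/dt = -θ̃, dθ̃/dt = φ (obtained from the WGAN losses h1(x)=h3(x)=x, h2(x)=-x with c=0). Every solution satisfies φ(t)² + θ̃(t)² = φ(0)² + θ̃(0)² for all t, so no solution with nonzero initial value converges to the equilibrium (0,0); the system is not asymptotically stable. -/

import Mathlib

open Filter Topology

section Rotation

variable {φ θ : ℝ → ℝ}

theorem hasDerivAt_sq_add_sq_of_rotation (hφ : ∀ t, HasDerivAt φ (-(θ t)) t)
    (hθ : ∀ t, HasDerivAt θ (φ t) t) (t : ℝ) :
    HasDerivAt (fun t => φ t ^ 2 + θ t ^ 2) 0 t :=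
  (((hφ t).fun_pow 2).fun_add ((hθ t).fun_pow 2)).congr_deriv (by push_cast; ring)

theorem sq_add_sq_eq_of_rotation (hφ : ∀ t, HasDerivAt φ (-(θ t)) t)
    (hθ : ∀ t, HasDerivAt θ (φ t) t) (s t : ℝ) :
    φ s ^ 2 + θ s ^ 2 = φ t ^ 2 + θ t ^ 2 :=
  is_const_of_deriv_eq_zero
    (fun x => (hasDerivAt_sq_add_sq_of_rotation hφ hθ x).differentiableAt)
    (fun x => (hasDerivAt_sq_add_sq_of_rotation hφ hθ x).deriv) s t

end Rotation

theorem eq_of_tendsto_of_forall_comp_eq {α X Y : Type*} [TopologicalSpace X]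
    [TopologicalSpace Y] [T2Space Y] {l : Filter α} [l.NeBot] {f : α → X} {a : X}
    {g : X → Y} {c : Y} (hf : Tendsto f l (𝓝 a)) (hg : ContinuousAt g a)
    (hgf : ∀ x, g (f x) = c) : g a = c :=
  tendsto_nhds_unique (hg.tendsto.comp hf)
    (by simp only [Function.comp_def, hgf, tendsto_const_nhds])

/-- The Dirac-WGAN gradient-flow dynamics rotate on circles: the squared norm is conserved,
so no nonzero solution converges to the equilibrium (0,0). -/
theorem dirac_wgan_not_asymptotically_stable
    (φ θ : ℝ → ℝ)
    (hφ : ∀ t : ℝ, HasDerivAt φ (-(θ t)) t)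
    (hθ : ∀ t : ℝ, HasDerivAt θ (φ t) t) :
    (∀ t : ℝ, φ t ^ 2 + θ t ^ 2 = φ 0 ^ 2 + θ 0 ^ 2) ∧
    ((φ 0, θ 0) ≠ (0, 0) →
      ¬ Tendsto (fun t : ℝ => (φ t, θ t)) atTop (nhds ((0 : ℝ), (0 : ℝ)))) := by
  have hconst := fun t => sq_add_sq_eq_of_rotation hφ hθ t 0
  refine ⟨hconst, fun hne htend => hne ?_⟩
  have hzero : φ 0 ^ 2 + θ 0 ^ 2 = 0 :=
    (eq_of_tendsto_of_forall_comp_eq (g := fun p : ℝ × ℝ => p.1 ^ 2 + p.2 ^ 2) htend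
      (by fun_prop) hconst).symm.trans (by norm_num)
  simp only [sq] at hzero
  obtain ⟨hφ0, hθ0⟩ := mul_self_add_mul_self_eq_zero.1 hzero
  rw [hφ0, hθ0]
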